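/- arXiv:2408.06637 — 2 statements merged into one kernel-verified Lean document; each statement's English description precedes it below -/
import Mathlib

section
/- Let b : ℕ → ℝ≥0 with b₀ > 0, and suppose β_m > 0 satisfies β_m = Σ_{q=0}^{m−1} b_q β_m^{-q} for each m, and β > 0 satisfies β = Σ_{q=0}^∞ b_q β^{-q} (convergent series). Then the sequence (β_m) is nondecreasing in m and converges to β as m → ∞. -/
open Filter

/-- Let `b : ℕ → ℝ≥0` with `b₀ > 0`. If for each `m ≥ 1`, `β_m > 0` satisfies
`β_m = Σ_{q<m} b_q β_m^{-q}`, and `β > 0` satisfies `β = Σ_{q} b_q β^{-q}`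
(convergent series), then `(β_m)` is nondecreasing and converges to `β`. -/
theorem stmt_11 (b : ℕ → ℝ) (hb : ∀ q, 0 ≤ b q) (hb0 : 0 < b 0)
    (βm : ℕ → ℝ)
    (hβm : ∀ m, 1 ≤ m → 0 < βm m ∧ βm m = ∑ q ∈ Finset.range m, b q / βm m ^ q)
    (β : ℝ) (hβ : 0 < β) (hsum : Summable fun q => b q / β ^ q)
    (heq : β = ∑' q, b q / β ^ q) :
    (∀ m n, 1 ≤ m → m ≤ n → βm m ≤ βm n) ∧ Tendsto βm atTop (nhds β) := by
  have hterm : ∀ s t : ℝ, 0 < s → s ≤ t → ∀ q, b q / t ^ q ≤ b q / s ^ q := by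
    intro s t hs hst q
    gcongr
    exact hb q
  have hsumle : ∀ s t : ℝ, 0 < s → s ≤ t → ∀ n,
      ∑ q ∈ Finset.range n, b q / t ^ q ≤ ∑ q ∈ Finset.range n, b q / s ^ q :=
    fun s t hs hst n => Finset.sum_le_sum fun q _ => hterm s t hs hst q
  -- βm m ≤ β for m ≥ 1
  have hle : ∀ m, 1 ≤ m → βm m ≤ β := by
    intro m hm
    by_contra h
    push_neg at h
    have h1 := hsumle β (βm m) hβ h.le m
    have h2 := Summable.sum_le_tsum (Finset.range m)
      (fun q _ => div_nonneg (hb q) (by positivity)) hsum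
    rw [← heq] at h2
    have := (hβm m hm).2
    linarith
  -- monotonicity
  have hmono : ∀ m n, 1 ≤ m → m ≤ n → βm m ≤ βm n := by
    intro m n hm hmn
    have hn : 1 ≤ n := hm.trans hmn
    by_contra h
    push_neg at h
    have hpn := (hβm n hn).1
    have hpm := (hβm m hm).1
    have h1 := hsumle (βm n) (βm m) hpn h.le n
    have h2 : ∑ q ∈ Finset.range m, b q / βm m ^ q
        ≤ ∑ q ∈ Finset.range n, b q / βm m ^ q := by
      apply Finset.sum_le_sum_of_subset_of_nonneg
      · exact Finset.range_subset_range.mpr hmn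
      · intro q _ _; exact div_nonneg (hb q) (pow_nonneg hpm.le q)
    have e1 := (hβm m hm).2
    have e2 := (hβm n hn).2
    linarith
  refine ⟨hmono, ?_⟩
  set γ : ℕ → ℝ := fun m => βm (m + 1) with hγ
  have hγmono : Monotone γ := by
    intro i j hij
    exact hmono (i + 1) (j + 1) (by omega) (by omega)
  have hγle : ∀ m, γ m ≤ β := fun m => hle (m + 1) (by omega)
  have hbdd : BddAbove (Set.range γ) := ⟨β, by rintro x ⟨m, rfl⟩; exact hγle m⟩
  set L : ℝ := ⨆ m, γ m with hL
  have hγtend : Tendsto γ atTop (nhds L) := tendsto_atTop_ciSup hγmono hbdd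
  have hγ0 : γ 0 = b 0 := by
    have := (hβm 1 le_rfl).2
    simpa using this
  have hLpos : 0 < L := by
    have := le_ciSup hbdd 0
    rw [hγ0] at this
    linarith
  have hLβ : L ≤ β := ciSup_le hγle
  -- key: partial sums at L bounded by L
  have hkey : ∀ n, ∑ q ∈ Finset.range n, b q / L ^ q ≤ L := by
    intro n
    have hA : Tendsto (fun m => ∑ q ∈ Finset.range n, b q / γ m ^ q) atTop
        (nhds (∑ q ∈ Finset.range n, b q / L ^ q)) := by
      apply tendsto_finset_sum
      intro q _
      exact Tendsto.div tendsto_const_nhds (hγtend.pow q) (pow_ne_zero q hLpos.ne')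
    refine le_of_tendsto_of_tendsto hA hγtend ?_
    filter_upwards [eventually_ge_atTop n] with m hmn
    have hpm := (hβm (m + 1) (by omega)).1
    have e := (hβm (m + 1) (by omega)).2
    have hsub : ∑ q ∈ Finset.range n, b q / βm (m + 1) ^ q
        ≤ ∑ q ∈ Finset.range (m + 1), b q / βm (m + 1) ^ q := by
      apply Finset.sum_le_sum_of_subset_of_nonneg
      · exact Finset.range_subset_range.mpr (by omega)
      · intro q _ _; exact div_nonneg (hb q) (pow_nonneg hpm.le q)
    show ∑ q ∈ Finset.range n, b q / γ m ^ q ≤ γ m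
    simp only [hγ]
    linarith
  have hnonneg : ∀ q, 0 ≤ b q / L ^ q := fun q => div_nonneg (hb q) (by positivity)
  have hsumL : Summable fun q => b q / L ^ q :=
    summable_of_sum_range_le hnonneg hkey
  have htsumL : ∑' q, b q / L ^ q ≤ L := Summable.tsum_le_of_sum_range_le hsumL hkey
  have hβL : β ≤ L := by
    have hcomp : ∑' q, b q / β ^ q ≤ ∑' q, b q / L ^ q :=
      Summable.tsum_le_tsum (hterm L β hLpos hLβ) hsum hsumL
    rw [← heq] at hcomp
    linarith
  have hLeq : L = β := le_antisymm hLβ hβL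
  rw [← hLeq]
  exact (tendsto_add_atTop_iff_nat 1).mp hγtend
end

section
/- Let X₁,…,X_r be compact metric spaces with continuous maps T_i : X_i → X_i and factor maps π_i : X_{i+1} → X_i (continuous surjections with π_i ∘ T_{i+1} = T_i ∘ π_i). For fixed exponents a = (a₁,…,a_{r−1}) with 0 < a_i ≤ 1 and fixed ε > 0, the function N ↦ log #ᵃ₁(X₁, N, ε) is subadditive: #ᵃ₁(X₁, M+N, ε) ≤ #ᵃ₁(X₁, M, ε) · #ᵃ₁(X₁, N, ε). -/
open Filter

/-- `U : Fin n → Set X` is an open cover of `Ω` by sets of `d_N`-diameter `< ε`,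
where `d_N(x,y) = max_{0 ≤ k < N} dist(Tᵏx, Tᵏy)`. -/
def IsWCover {X : Type} [MetricSpace X] (T : X → X) (N : ℕ) (ε : ℝ)
    (Ω : Set X) {n : ℕ} (U : Fin n → Set X) : Prop :=
  (∀ j, IsOpen (U j)) ∧ Ω ⊆ ⋃ j, U j ∧
    ∀ j, ∀ y ∈ U j, ∀ z ∈ U j, ∀ k < N, dist (T^[k] y) (T^[k] z) < ε

/-- The backward-inductively defined weighted cover count `#ᵃᵢ(Ω, N, ε)` of
Alibabaei/Tsukamoto, for the chain `⋯ → X (i+1) → X i → ⋯ → X 0` with factor maps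
`π i : X (i+1) → X i`.  `wcount X T π a N ε fuel i Ω` is `#ᵃ` at level `i` with
`fuel` further levels above: for `fuel = 0` it is the minimal cardinality of an
open cover of `Ω` by sets of `d_N`-diameter `< ε`, and at `fuel + 1` it is the
infimum over such covers `{U_j}` of `Σ_j (#ᵃ(π i ⁻¹' U j))^(a i)`. -/
noncomputable def wcount (X : ℕ → Type) [∀ i, MetricSpace (X i)]
    (T : ∀ i, X i → X i) (π : ∀ i, X (i + 1) → X i) (a : ℕ → ℝ)
    (N : ℕ) (ε : ℝ) : ℕ → (i : ℕ) → Set (X i) → ℝ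
  | 0, i, Ω => sInf {x : ℝ | ∃ n : ℕ, ∃ U : Fin n → Set (X i),
      IsWCover (T i) N ε Ω U ∧ x = n}
  | fuel + 1, i, Ω => sInf {x : ℝ | ∃ n : ℕ, ∃ U : Fin n → Set (X i),
      IsWCover (T i) N ε Ω U ∧
        x = ∑ j, wcount X T π a N ε fuel (i + 1) (π i ⁻¹' U j) ^ a i}

lemma exists_wcover {X : Type} [MetricSpace X] [CompactSpace X] {T : X → X}
    (hT : Continuous T) (N : ℕ) {ε : ℝ} (hε : 0 < ε) (Ω : Set X) :
    ∃ n : ℕ, ∃ U : Fin n → Set X, IsWCover T N ε Ω U := by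
  classical
  set B : X → Set X := fun x =>
    ⋂ k ∈ Finset.range N, (T^[k]) ⁻¹' Metric.ball (T^[k] x) (ε / 2) with hB
  have hopen : ∀ x, IsOpen (B x) := fun x =>
    isOpen_biInter_finset fun k _ => (Metric.isOpen_ball).preimage (hT.iterate k)
  have hmem : ∀ x, x ∈ B x := by
    intro x
    simp only [hB, Set.mem_iInter, Set.mem_preimage, Metric.mem_ball, dist_self]
    intro k _
    linarith
  have hcov : (Set.univ : Set X) ⊆ ⋃ x, B x := fun x _ => Set.mem_iUnion.2 ⟨x, hmem x⟩
  obtain ⟨t, ht⟩ := isCompact_univ.elim_finite_subcover B hopen hcov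
  refine ⟨t.card, fun j => B ((t.equivFin.symm j : t) : X), ?_, ?_, ?_⟩
  · intro j; exact hopen _
  · intro y _
    obtain ⟨x, hx, hyx⟩ := Set.mem_iUnion₂.1 (ht (Set.mem_univ y))
    refine Set.mem_iUnion.2 ⟨t.equivFin ⟨x, hx⟩, ?_⟩
    simpa using hyx
  · intro j y hy z hz k hk
    have hy' : dist (T^[k] y) (T^[k] ((t.equivFin.symm j : t) : X)) < ε / 2 := by
      have := Set.mem_iInter₂.1 hy k (Finset.mem_range.2 hk)
      simpa [Metric.mem_ball] using this
    have hz' : dist (T^[k] z) (T^[k] ((t.equivFin.symm j : t) : X)) < ε / 2 := by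
      have := Set.mem_iInter₂.1 hz k (Finset.mem_range.2 hk)
      simpa [Metric.mem_ball] using this
    calc dist (T^[k] y) (T^[k] z)
        ≤ dist (T^[k] y) (T^[k] ((t.equivFin.symm j : t) : X))
          + dist (T^[k] ((t.equivFin.symm j : t) : X)) (T^[k] z) := dist_triangle _ _ _
      _ < ε / 2 + ε / 2 := by rw [dist_comm (T^[k] ((t.equivFin.symm j : t) : X))]; linarith
      _ = ε := by ring

lemma mul_csInf_aux {S T : Set ℝ} {c : ℝ} (hS : S.Nonempty) (hT : T.Nonempty)
    (hS0 : ∀ x ∈ S, 0 ≤ x) (hT0 : ∀ y ∈ T, 0 ≤ y)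
    (h : ∀ x ∈ S, ∀ y ∈ T, c ≤ x * y) : c ≤ sInf S * sInf T := by
  have hs0 : 0 ≤ sInf S := Real.sInf_nonneg hS0
  have ht0 : 0 ≤ sInf T := Real.sInf_nonneg hT0
  have step1 : ∀ x ∈ S, c ≤ x * sInf T := by
    intro x hx
    rcases eq_or_lt_of_le (hS0 x hx) with h0 | h0
    · obtain ⟨y, hy⟩ := hT
      have := h x hx y hy
      rw [← h0] at this ⊢
      simpa using this
    · have : c / x ≤ sInf T :=
        le_csInf hT fun y hy => (div_le_iff₀ h0).2 (by rw [mul_comm]; exact h x hx y hy)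
      calc c = c / x * x := by field_simp
        _ ≤ sInf T * x := mul_le_mul_of_nonneg_right this (le_of_lt h0)
        _ = x * sInf T := mul_comm _ _
  rcases eq_or_lt_of_le ht0 with h0 | h0
  · obtain ⟨x, hx⟩ := hS
    have := step1 x hx
    rw [← h0] at this ⊢
    simpa using this
  · have : c / sInf T ≤ sInf S :=
      le_csInf hS fun x hx => (div_le_iff₀ h0).2 (step1 x hx)
    calc c = c / sInf T * sInf T := by field_simp
      _ ≤ sInf S * sInf T := mul_le_mul_of_nonneg_right this (le_of_lt h0)

lemma IsWCover.combine {X : Type} [MetricSpace X] {T : X → X} (hT : Continuous T)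
    {M N : ℕ} {ε : ℝ} {A B : Set X} {n m : ℕ} {U : Fin n → Set X} {V : Fin m → Set X}
    (hU : IsWCover T M ε A U) (hV : IsWCover T N ε B V) :
    IsWCover T (M + N) ε (A ∩ (T^[M]) ⁻¹' B)
      (fun p : Fin (n * m) =>
        U (finProdFinEquiv.symm p).1 ∩ (T^[M]) ⁻¹' V (finProdFinEquiv.symm p).2) := by
  refine ⟨fun p => (hU.1 _).inter ((hV.1 _).preimage (hT.iterate M)), ?_, ?_⟩
  · rintro y ⟨hyA, hyB⟩
    obtain ⟨j, hj⟩ := Set.mem_iUnion.1 (hU.2.1 hyA)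
    obtain ⟨k, hk⟩ := Set.mem_iUnion.1 (hV.2.1 hyB)
    refine Set.mem_iUnion.2 ⟨finProdFinEquiv (j, k), ?_⟩
    simp only [Equiv.symm_apply_apply]
    exact ⟨hj, hk⟩
  · rintro p y ⟨hyU, hyV⟩ z ⟨hzU, hzV⟩ k hk
    by_cases hkM : k < M
    · exact hU.2.2 _ y hyU z hzU k hkM
    · push_neg at hkM
      have hk' : k - M < N := by omega
      have hkeq : k = (k - M) + M := by omega
      have := hV.2.2 _ _ hyV _ hzV (k - M) hk'
      rw [hkeq, Function.iterate_add_apply, Function.iterate_add_apply]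
      exact this

lemma wcount_nonneg (X : ℕ → Type) [∀ i, MetricSpace (X i)]
    (T : ∀ i, X i → X i) (π : ∀ i, X (i + 1) → X i) (a : ℕ → ℝ)
    (N : ℕ) (ε : ℝ) (fuel i : ℕ) (Ω : Set (X i)) :
    0 ≤ wcount X T π a N ε fuel i Ω := by
  induction fuel generalizing i Ω with
  | zero =>
    apply Real.sInf_nonneg
    rintro x ⟨n, U, _, rfl⟩
    positivity
  | succ fuel ih =>
    apply Real.sInf_nonneg
    rintro x ⟨n, U, _, rfl⟩
    exact Finset.sum_nonneg fun j _ => Real.rpow_nonneg (ih _ _) _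

lemma wcount_submul (X : ℕ → Type) [∀ i, MetricSpace (X i)]
    [∀ i, CompactSpace (X i)]
    (T : ∀ i, X i → X i) (hT : ∀ i, Continuous (T i))
    (π : ∀ i, X (i + 1) → X i)
    (hcomm : ∀ i, π i ∘ T (i + 1) = T i ∘ π i)
    (a : ℕ → ℝ) (ha : ∀ i, 0 < a i) (ε : ℝ) (hε : 0 < ε)
    (M N : ℕ) (fuel : ℕ) :
    ∀ (i : ℕ) (A B : Set (X i)),
      wcount X T π a (M + N) ε fuel i (A ∩ (T i)^[M] ⁻¹' B) ≤
        wcount X T π a M ε fuel i A * wcount X T π a N ε fuel i B := by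
  induction fuel with
  | zero =>
    intro i A B
    show sInf _ ≤ sInf _ * sInf _
    apply mul_csInf_aux
    · obtain ⟨n, U, hU⟩ := exists_wcover (hT i) M hε A
      exact ⟨n, n, U, hU, rfl⟩
    · obtain ⟨n, U, hU⟩ := exists_wcover (hT i) N hε B
      exact ⟨n, n, U, hU, rfl⟩
    · rintro x ⟨n, U, _, rfl⟩; positivity
    · rintro x ⟨n, U, _, rfl⟩; positivity
    · rintro x ⟨n, U, hU, rfl⟩ y ⟨m, V, hV, rfl⟩
      have hmem : ((n * m : ℕ) : ℝ) ∈ {x : ℝ | ∃ n' : ℕ, ∃ W : Fin n' → Set (X i),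
          IsWCover (T i) (M + N) ε (A ∩ (T i)^[M] ⁻¹' B) W ∧ x = n'} :=
        ⟨n * m, _, hU.combine (hT i) hV, rfl⟩
      have hbdd : BddBelow {x : ℝ | ∃ n' : ℕ, ∃ W : Fin n' → Set (X i),
          IsWCover (T i) (M + N) ε (A ∩ (T i)^[M] ⁻¹' B) W ∧ x = n'} :=
        ⟨0, by rintro x ⟨n', W, _, rfl⟩; positivity⟩
      calc sInf _ ≤ ((n * m : ℕ) : ℝ) := csInf_le hbdd hmem
        _ = (n : ℝ) * m := by push_cast; ring
  | succ fuel ih =>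
    intro i A B
    show sInf _ ≤ sInf _ * sInf _
    apply mul_csInf_aux
    · obtain ⟨n, U, hU⟩ := exists_wcover (hT i) M hε A
      exact ⟨_, n, U, hU, rfl⟩
    · obtain ⟨n, U, hU⟩ := exists_wcover (hT i) N hε B
      exact ⟨_, n, U, hU, rfl⟩
    · rintro x ⟨n, U, _, rfl⟩
      exact Finset.sum_nonneg fun j _ => Real.rpow_nonneg (wcount_nonneg _ _ _ _ _ _ _ _ _) _
    · rintro x ⟨n, U, _, rfl⟩
      exact Finset.sum_nonneg fun j _ => Real.rpow_nonneg (wcount_nonneg _ _ _ _ _ _ _ _ _) _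
    · rintro x ⟨n, U, hU, rfl⟩ y ⟨m, V, hV, rfl⟩
      set W : Fin (n * m) → Set (X i) := fun p =>
        U (finProdFinEquiv.symm p).1 ∩ ((T i)^[M]) ⁻¹' V (finProdFinEquiv.symm p).2 with hW
      have hWc : IsWCover (T i) (M + N) ε (A ∩ (T i)^[M] ⁻¹' B) W := hU.combine (hT i) hV
      have hmem : (∑ p, wcount X T π a (M + N) ε fuel (i + 1) (π i ⁻¹' W p) ^ a i) ∈
          {x : ℝ | ∃ n' : ℕ, ∃ W' : Fin n' → Set (X i),
            IsWCover (T i) (M + N) ε (A ∩ (T i)^[M] ⁻¹' B) W' ∧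
            x = ∑ j, wcount X T π a (M + N) ε fuel (i + 1) (π i ⁻¹' W' j) ^ a i} :=
        ⟨n * m, W, hWc, rfl⟩
      have hbdd : BddBelow {x : ℝ | ∃ n' : ℕ, ∃ W' : Fin n' → Set (X i),
          IsWCover (T i) (M + N) ε (A ∩ (T i)^[M] ⁻¹' B) W' ∧
          x = ∑ j, wcount X T π a (M + N) ε fuel (i + 1) (π i ⁻¹' W' j) ^ a i} :=
        ⟨0, by
          rintro x ⟨n', W', _, rfl⟩
          exact Finset.sum_nonneg fun j _ => Real.rpow_nonneg (wcount_nonneg _ _ _ _ _ _ _ _ _) _⟩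
      refine le_trans (csInf_le hbdd hmem) ?_
      -- rewrite each preimage using commutation
      have hsemi0 : Function.Semiconj (π i) (T (i+1)) (T i) := fun x => congrFun (hcomm i) x
      have hsemi : Function.Semiconj (π i) ((T (i+1))^[M]) ((T i)^[M]) :=
        hsemi0.iterate_right M
      have hpre : ∀ p : Fin (n * m), π i ⁻¹' W p =
          (π i ⁻¹' U (finProdFinEquiv.symm p).1) ∩
            ((T (i+1))^[M]) ⁻¹' (π i ⁻¹' V (finProdFinEquiv.symm p).2) := by
        intro p
        ext x
        simp only [hW, Set.mem_preimage, Set.mem_inter_iff, hsemi x]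
      calc (∑ p, wcount X T π a (M + N) ε fuel (i + 1) (π i ⁻¹' W p) ^ a i)
          ≤ ∑ p : Fin (n * m),
              (wcount X T π a M ε fuel (i + 1) (π i ⁻¹' U (finProdFinEquiv.symm p).1) ^ a i)
              * (wcount X T π a N ε fuel (i + 1) (π i ⁻¹' V (finProdFinEquiv.symm p).2) ^ a i) := by
            apply Finset.sum_le_sum
            intro p _
            rw [← Real.mul_rpow (wcount_nonneg _ _ _ _ _ _ _ _ _) (wcount_nonneg _ _ _ _ _ _ _ _ _)]
            apply Real.rpow_le_rpow (wcount_nonneg _ _ _ _ _ _ _ _ _) _ (le_of_lt (ha i))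
            rw [hpre p]
            exact ih (i + 1) _ _
        _ = ∑ q : Fin n × Fin m,
              (wcount X T π a M ε fuel (i + 1) (π i ⁻¹' U q.1) ^ a i)
              * (wcount X T π a N ε fuel (i + 1) (π i ⁻¹' V q.2) ^ a i) := by
            rw [← Equiv.sum_comp (finProdFinEquiv : Fin n × Fin m ≃ Fin (n * m)).symm]
        _ = (∑ j, wcount X T π a M ε fuel (i + 1) (π i ⁻¹' U j) ^ a i)
              * (∑ j, wcount X T π a N ε fuel (i + 1) (π i ⁻¹' V j) ^ a i) := by
            rw [Finset.sum_mul_sum, Fintype.sum_prod_type]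

/-- For a chain of compact metric dynamical systems with factor maps, exponents
`0 < aᵢ ≤ 1` and `ε > 0`, the weighted cover count `#ᵃ₁(X₁, N, ε)` is
submultiplicative in `N` (so `N ↦ log #ᵃ₁(X₁,N,ε)` is subadditive):
`#ᵃ₁(X₁, M+N, ε) ≤ #ᵃ₁(X₁, M, ε) · #ᵃ₁(X₁, N, ε)`. -/
theorem stmt_13 (r : ℕ) (hr : 1 ≤ r) (X : ℕ → Type) [∀ i, MetricSpace (X i)]
    [∀ i, CompactSpace (X i)]
    (T : ∀ i, X i → X i) (hT : ∀ i, Continuous (T i))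
    (π : ∀ i, X (i + 1) → X i) (hπc : ∀ i, Continuous (π i))
    (hπs : ∀ i, Function.Surjective (π i))
    (hcomm : ∀ i, π i ∘ T (i + 1) = T i ∘ π i)
    (a : ℕ → ℝ) (ha : ∀ i, 0 < a i ∧ a i ≤ 1) (ε : ℝ) (hε : 0 < ε)
    (M N : ℕ) :
    wcount X T π a (M + N) ε (r - 1) 0 Set.univ ≤
      wcount X T π a M ε (r - 1) 0 Set.univ *
        wcount X T π a N ε (r - 1) 0 Set.univ := by
  have := wcount_submul X T hT π hcomm a (fun i => (ha i).1) ε hε M N (r - 1) 0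
    Set.univ Set.univ
  simpa using this
end
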